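/- arXiv:1802.03657 — 6 statements merged into one kernel-verified Lean document; each statement's English description precedes it below -/
import Mathlib

section
/- Let ε be a tree-like map explained by an edge-labeled tree (T,λ). If the path P from the root ρ_T to some leaf x ∈ X contains an m-edge for some m ∈ M, then every edge of P has label m or ⊗. -/
/-!
The root has a second child besides the first vertex of `P`; following a path down from
it ends at a leaf `y`. The paths from the root to `y` and to `x` start with different edges,
so in a tree they share only the root; hence `lca(y, x) = ρ_T` and `P` is the path from
`lca(y, x)` to `x`. Every `M`-label on `P` therefore equals `ε(y, x)`, so all of them agree.
-/

namespace GenFitch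

/-- A rooted tree with leaf set `X`: a finite tree (acyclic connected simple
graph) with a distinguished root and an injective embedding of `X` onto the
set of vertices of degree at most one (the leaves). -/
structure RootedTree (X : Type) where
  V : Type
  fintypeV : Fintype V
  G : SimpleGraph V
  isTree : G.IsTree
  root : V
  leaf : X → V
  leaf_inj : Function.Injective leaf
  leaf_iff : ∀ v : V, (∃ x : X, leaf x = v) ↔ (G.neighborSet v).ncard ≤ 1

namespace RootedTree

variable {X : Type}

/-- Degree of a vertex. -/
noncomputable def deg (T : RootedTree X) (v : T.V) : ℕ := (T.G.neighborSet v).ncard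

/-- `v` is a leaf. -/
def IsLeaf (T : RootedTree X) (v : T.V) : Prop := ∃ x : X, T.leaf x = v

/-- `T` is phylogenetic: the root is an inner vertex of degree at least 2 and
every other inner vertex has degree at least 3. -/
def Phylo (T : RootedTree X) : Prop :=
  ¬ T.IsLeaf T.root ∧ 2 ≤ T.deg T.root ∧
    ∀ v : T.V, ¬ T.IsLeaf v → v ≠ T.root → 3 ≤ T.deg v

/-- `T` is binary: the root has degree exactly 2 and every other inner vertex
has degree exactly 3. -/
def Binary (T : RootedTree X) : Prop :=
  T.deg T.root = 2 ∧ ∀ v : T.V, ¬ T.IsLeaf v → v ≠ T.root → T.deg v = 3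

/-- `u` is an ancestor of `v` (written `u ⪰_T v`): `u` lies on the (unique)
path from the root to `v`. -/
def Anc (T : RootedTree X) (u v : T.V) : Prop :=
  ∀ p : T.G.Walk T.root v, p.IsPath → u ∈ p.support

/-- `l` is the least common ancestor of the set of vertices `S`. -/
def IsLcaSet (T : RootedTree X) (l : T.V) (S : Set T.V) : Prop :=
  (∀ v ∈ S, T.Anc l v) ∧ ∀ u : T.V, (∀ v ∈ S, T.Anc u v) → T.Anc u l

/-- `T` displays the rooted triple `xy|z`, i.e. `lca(x,y) ≺ lca(x,y,z)`. -/
def Displays (T : RootedTree X) (x y z : X) : Prop :=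
  ∃ l₂ l₃ : T.V, T.IsLcaSet l₂ {T.leaf x, T.leaf y} ∧
    T.IsLcaSet l₃ {T.leaf x, T.leaf y, T.leaf z} ∧ T.Anc l₃ l₂ ∧ l₂ ≠ l₃

end RootedTree

/-- Some edge on the (unique) path from `lca(x,y)` to `y` carries the label
`m`.  Labels are drawn from `Option L`, with `none` playing the role of `⊗`. -/
def PathHasLabel {X L : Type} (T : RootedTree X) (lam : Sym2 T.V → Option L)
    (x y : X) (m : L) : Prop :=
  ∃ l : T.V, T.IsLcaSet l {T.leaf x, T.leaf y} ∧
    ∃ p : T.G.Walk l (T.leaf y), p.IsPath ∧ ∃ e ∈ p.edges, lam e = some m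

/-- The edge-labeled tree `(T,lam)` explains the map `eps`:
for all distinct `x y`, `eps x y = some m` iff some edge on the path from
`lca(x,y)` to `y` has label `m`, and `eps x y = none` (i.e. `⊗`) iff no edge
on that path carries a label in `L`. -/
def Explains {X L : Type} (T : RootedTree X) (lam : Sym2 T.V → Option L)
    (eps : X → X → Option L) : Prop :=
  ∀ x y : X, x ≠ y →
    ((∀ m : L, eps x y = some m ↔ PathHasLabel T lam x y m) ∧
     (eps x y = none ↔ ∀ m : L, ¬ PathHasLabel T lam x y m))

/-- `eps` is tree-like: some edge-labeled phylogenetic tree explains it. -/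
def TreeLike {X L : Type} (eps : X → X → Option L) : Prop :=
  ∃ (T : RootedTree X) (lam : Sym2 T.V → Option L), T.Phylo ∧ Explains T lam eps

/-- The set `X_s` for a symbol `s ∈ M ∪ {⊗}` (encoded as `s : Option M`):
those `x` having an in-arc labeled `s` and all other in-arcs labeled `⊗` or `s`. -/
def Xset {X M : Type} (eps : X → X → Option M) (s : Option M) : Set X :=
  {x : X | ∃ z : X, z ≠ x ∧ eps z x = s ∧
    ∀ z' : X, z' ≠ z → z' ≠ x → (eps z' x = none ∨ eps z' x = s)}

/-- The sets `X_s`, `s ∈ M ∪ {⊗}`, form a quasi-partition of `X`: pairwise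
disjoint, union `X`, and at most one of them empty. -/
def QuasiPartition {X M : Type} (eps : X → X → Option M) : Prop :=
  (∀ s t : Option M, s ≠ t → Disjoint (Xset eps s) (Xset eps t)) ∧
  (⋃ s : Option M, Xset eps s) = Set.univ ∧
  {s : Option M | Xset eps s = ∅}.Subsingleton

/-- A digraph `(Y, A)` is a simple Fitch graph: it is explained by a
`{1,⊗}`-edge-labeled phylogenetic tree on `Y` (a digraph on at most one
vertex is trivially explained by the trivial tree). -/
def IsFitchGraph (Y : Type) (A : Y → Y → Prop) : Prop :=
  Subsingleton Y ∨
  ∃ (T : RootedTree Y) (lam : Sym2 T.V → Option Unit), T.Phylo ∧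
    ∀ x y : Y, x ≠ y → (A x y ↔ PathHasLabel T lam x y Unit.unit)

/-- `T'` is obtained from `T` by contracting (the fibers of) `φ`; equivalently,
`T` refines `T'`. -/
structure IsContractionMap {X : Type} (T T' : RootedTree X) (φ : T.V → T'.V) :
    Prop where
  surj : Function.Surjective φ
  root_map : φ T.root = T'.root
  leaf_map : ∀ x : X, φ (T.leaf x) = T'.leaf x
  adj_map : ∀ a b : T.V, T.G.Adj a b → φ a = φ b ∨ T'.G.Adj (φ a) (φ b)
  adj_lift : ∀ u v : T'.V, T'.G.Adj u v →
    ∃ a b : T.V, T.G.Adj a b ∧ φ a = u ∧ φ b = v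
  fiber_conn : ∀ u : T'.V, (T.G.induce {a : T.V | φ a = u}).Connected

/-- `(T,lam)` is a least-resolved tree explaining `eps`: it explains `eps` and
no tree obtained from `T` by contracting one or more edges admits an
edge-labeling explaining `eps`. -/
def LeastResolved {X M : Type} (eps : X → X → Option M) (T : RootedTree X)
    (lam : Sym2 T.V → Option M) : Prop :=
  T.Phylo ∧ Explains T lam eps ∧
    ∀ (T' : RootedTree X) (φ : T.V → T'.V) (lam' : Sym2 T'.V → Option M),
      IsContractionMap T T' φ → ¬ Function.Injective φ → T'.Phylo →
        ¬ Explains T' lam' eps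

/-- The rooted triple `xy|z` is informative for `eps`. -/
def Informative {X M : Type} (eps : X → X → Option M) (x y z : X) : Prop :=
  x ≠ y ∧ x ≠ z ∧ y ≠ z ∧
  ∃ m : M, eps z x = some m ∧ eps z y = some m ∧ eps x z = eps y z ∧
    (eps x y = none ∨ eps x y = some m) ∧
    (eps y x = none ∨ eps y x = some m) ∧
    (eps x y = none ∨ eps y x = none)

/-- `T'` (a rooted tree on `Y`, with `incl : Y → X` and vertex embedding `ι`)
is the restriction `T|Y` of `T` to the leaf set `Y`: leaves map to leaves,
the ancestor relation is preserved and reflected, the vertices of `T'`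
correspond exactly to the least common ancestors of pairs of `Y`-leaves in
`T`, and the root of `T'` corresponds to the least common ancestor of all
`Y`-leaves. -/
structure IsRestriction {X Y : Type} (T : RootedTree X) (incl : Y → X)
    (T' : RootedTree Y) (ι : T'.V → T.V) : Prop where
  inj : Function.Injective ι
  leaf_map : ∀ y : Y, ι (T'.leaf y) = T.leaf (incl y)
  anc_iff : ∀ a b : T'.V, T'.Anc a b ↔ T.Anc (ι a) (ι b)
  image : ∀ v : T.V, (∃ a : T'.V, ι a = v) ↔
      ∃ y z : Y, T.IsLcaSet v {T.leaf (incl y), T.leaf (incl z)}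
  root_map : T.IsLcaSet (ι T'.root) {v : T.V | ∃ y : Y, v = T.leaf (incl y)}

open SimpleGraph Walk

theorem _root_.SimpleGraph.IsAcyclic.eq_of_mem_support_of_snd_ne {V : Type} {G : SimpleGraph V}
    (hG : G.IsAcyclic) {a b c u : V} {p : G.Walk a b} {q : G.Walk a c}
    (hp : p.IsPath) (hq : q.IsPath) (hsnd : p.snd ≠ q.snd)
    (hup : u ∈ p.support) (huq : u ∈ q.support) : u = a := by
  classical
  by_contra hua
  apply hsnd
  rw [← snd_takeUntil hua p hup, ← snd_takeUntil hua q huq]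
  exact congrArg (fun r : G.Path a u => r.1.snd)
    ((hG.subsingleton_path a u).elim ⟨_, hp.takeUntil hup⟩ ⟨_, hq.takeUntil huq⟩)

namespace RootedTree

variable {X : Type} (T : RootedTree X)

theorem exists_adj_notMem_support {a v : T.V} (q : T.G.Walk a v) (hq : q.IsPath)
    (hv : ¬ T.IsLeaf v) : ∃ u, T.G.Adj v u ∧ u ∉ q.support := by
  have hdeg : 1 < (T.G.neighborSet v).ncard :=
    lt_of_not_ge fun h => hv ((T.leaf_iff v).mpr h)
  obtain ⟨u, hvu, hu⟩ := Set.exists_ne_of_one_lt_ncard hdeg q.penultimate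
  exact ⟨u, hvu, fun h => hu (T.isTree.isAcyclic.eq_penultimate_of_adj_end hq hvu h)⟩

theorem exists_isPath_append_leaf {a v : T.V} (q : T.G.Walk a v) (hq : q.IsPath) :
    ∃ (y : X) (r : T.G.Walk v (T.leaf y)), (q.append r).IsPath := by
  by_cases hv : T.IsLeaf v
  · obtain ⟨y, rfl⟩ := hv
    exact ⟨y, nil, by simpa using hq⟩
  · obtain ⟨u, hvu, hu⟩ := T.exists_adj_notMem_support q hq hv
    obtain ⟨y, r, hr⟩ := exists_isPath_append_leaf (q.concat hvu) (hq.concat hu hvu)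
    exact ⟨y, cons hvu r, by rwa [concat_append] at hr⟩
termination_by @Fintype.card T.V T.fintypeV - q.length
decreasing_by
  let _ : Fintype T.V := T.fintypeV
  have := (hq.concat hu hvu).length_lt
  rw [length_concat] at this ⊢
  omega

theorem isLcaSet_root_of_support_inter {a b : T.V} (p : T.G.Walk T.root a)
    (q : T.G.Walk T.root b) (hp : p.IsPath) (hq : q.IsPath)
    (hmeet : ∀ u ∈ p.support, u ∈ q.support → u = T.root) :
    T.IsLcaSet T.root {a, b} := by
  refine ⟨fun _ _ r _ => r.start_mem_support, fun u hu r _ => ?_⟩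
  rw [hmeet u (hu a (by simp) p hp) (hu b (by simp) q hq)]
  exact r.start_mem_support

theorem exists_ne_isLcaSet_root (hT : T.Phylo) (x : X) :
    ∃ y, y ≠ x ∧ T.IsLcaSet T.root {T.leaf y, T.leaf x} := by
  obtain ⟨p, hp, -⟩ := T.isTree.existsUnique_path T.root (T.leaf x)
  obtain ⟨w, hw, hwp⟩ : ∃ w, T.G.Adj T.root w ∧ w ≠ p.snd :=
    Set.exists_ne_of_one_lt_ncard hT.2.1 p.snd
  have hw' : (cons hw (nil : T.G.Walk w w)).IsPath := by simpa using hw.ne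
  obtain ⟨y, r, hr⟩ := T.exists_isPath_append_leaf _ hw'
  rw [cons_append, nil_append] at hr
  have hmeet : ∀ u ∈ (cons hw r).support, u ∈ p.support → u = T.root :=
    fun u huq hup => T.isTree.isAcyclic.eq_of_mem_support_of_snd_ne hr hp
      (by simpa [snd_cons] using hwp) huq hup
  refine ⟨y, fun hyx => ?_, T.isLcaSet_root_of_support_inter _ p hr hp hmeet⟩
  subst hyx
  exact hT.1 ⟨y, hmeet _ (cons hw r).end_mem_support p.end_mem_support⟩

end RootedTree

theorem Explains.eq_some_of_mem_edges {X L : Type} {T : RootedTree X}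
    {lam : Sym2 T.V → Option L} {eps : X → X → Option L} (hexp : Explains T lam eps)
    {x y : X} (hxy : x ≠ y) {l : T.V} (hl : T.IsLcaSet l {T.leaf x, T.leaf y})
    {p : T.G.Walk l (T.leaf y)} (hp : p.IsPath) {e : Sym2 T.V} (he : e ∈ p.edges)
    {m : L} (hlam : lam e = some m) : eps x y = some m :=
  ((hexp x y hxy).1 m).2 ⟨l, hl, p, hp, e, he, hlam⟩

theorem stmt0_general {X M : Type}
    (eps : X → X → Option M)
    (T : RootedTree X) (lam : Sym2 T.V → Option M)
    (hphylo : T.Phylo) (hexp : Explains T lam eps)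
    (x : X) (m : M)
    (p : T.G.Walk T.root (T.leaf x)) (hp : p.IsPath)
    (hm : ∃ e ∈ p.edges, lam e = some m) :
    ∀ e ∈ p.edges, lam e = some m ∨ lam e = none := by
  obtain ⟨y, hyx, hlca⟩ := T.exists_ne_isLcaSet_root hphylo x
  obtain ⟨e₀, he₀, hlam₀⟩ := hm
  have hyxm := hexp.eq_some_of_mem_edges hyx hlca hp he₀ hlam₀
  intro e he
  cases hlam : lam e with
  | none => exact Or.inr rfl
  | some m' =>
    have hyxm' := hexp.eq_some_of_mem_edges hyx hlca hp he hlam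
    exact Or.inl (hyxm'.symm.trans hyxm)

theorem stmt0 {X M : Type} [Fintype X] [Fintype M] [Nonempty M]
    (hX : 1 < Fintype.card X)
    (eps : X → X → Option M)
    (hattain : ∀ m : M, ∃ x y : X, x ≠ y ∧ eps x y = some m)
    (T : RootedTree X) (lam : Sym2 T.V → Option M)
    (hphylo : T.Phylo) (hexp : Explains T lam eps)
    (x : X) (m : M)
    (p : T.G.Walk T.root (T.leaf x)) (hp : p.IsPath)
    (hm : ∃ e ∈ p.edges, lam e = some m) :
    ∀ e ∈ p.edges, lam e = some m ∨ lam e = none :=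
  stmt0_general eps T lam hphylo hexp x m p hp hm

end GenFitch
end

section
/- Let ε be a tree-like map. Then for every m ∈ M the set X_m is nonempty, and X_m = { x ∈ X : there exists z ∈ X with ε(z,x) = m }. -/
namespace GenFitch

open SimpleGraph in
private lemma path_unique {V : Type} {G : SimpleGraph V} (hT : G.IsTree)
    {a b : V} (p q : G.Walk a b) (hp : p.IsPath) (hq : q.IsPath) : p = q := by
  obtain ⟨-, h⟩ := isTree_iff_existsUnique_path.mp hT
  obtain ⟨r, -, hr⟩ := h a b
  rw [hr p hp, hr q hq]

open SimpleGraph in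
private lemma nested {V : Type} {G : SimpleGraph V} (hT : G.IsTree) {ρ t a b : V}
    (r : G.Walk ρ t) (hr : r.IsPath) (ha : a ∈ r.support) (hb : b ∈ r.support)
    (p : G.Walk a t) (q : G.Walk b t) (hp : p.IsPath) (hq : q.IsPath) :
    p.edges ⊆ q.edges ∨ q.edges ⊆ p.edges := by
  haveI := Classical.decEq V
  by_cases hab : a = b
  · subst hab
    rw [path_unique hT p q hp hq]
    exact Or.inl (fun e he => he)
  have hsplit : b ∈ (r.dropUntil a ha).support ∨ a ∈ (r.dropUntil b hb).support := by
    by_contra hcon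
    push_neg at hcon
    obtain ⟨h1, h2⟩ := hcon
    have hb1 : b ∈ (r.takeUntil a ha).support := by
      have hsp := r.take_spec ha
      have := hb
      rw [← hsp, Walk.mem_support_append_iff] at this
      tauto
    have ha1 : a ∈ (r.takeUntil b hb).support := by
      have hsp := r.take_spec hb
      have := ha
      rw [← hsp, Walk.mem_support_append_iff] at this
      tauto
    have hkey : ∀ (c d : V) (hc : c ∈ r.support) (hd : d ∈ r.support)
        (hcd : d ∈ (r.takeUntil c hc).support),
        (r.takeUntil d hd).length ≤ (r.takeUntil c hc).length := by
      intro c d hc hd hcd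
      have heq : (r.takeUntil c hc).takeUntil d hcd = r.takeUntil d hd :=
        path_unique hT _ _ ((hr.takeUntil hc).takeUntil hcd) (hr.takeUntil hd)
      rw [← heq]
      exact Walk.length_takeUntil_le _ hcd
    have hle1 := hkey a b ha hb hb1
    have hle2 := hkey b a hb ha ha1
    have hleneq : (r.takeUntil b hb).length = (r.takeUntil a ha).length :=
      le_antisymm hle1 hle2
    have heq : (r.takeUntil a ha).takeUntil b hb1 = r.takeUntil b hb :=
      path_unique hT _ _ ((hr.takeUntil ha).takeUntil hb1) (hr.takeUntil hb)
    have hsp := (r.takeUntil a ha).take_spec hb1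
    have hlen := congrArg Walk.length hsp
    rw [Walk.length_append, heq, hleneq] at hlen
    have hzero : ((r.takeUntil a ha).dropUntil b hb1).length = 0 := by omega
    exact hab (Walk.eq_of_length_eq_zero hzero).symm
  have hpd : p = r.dropUntil a ha := path_unique hT _ _ hp (hr.dropUntil ha)
  have hqd : q = r.dropUntil b hb := path_unique hT _ _ hq (hr.dropUntil hb)
  rcases hsplit with hmem | hmem
  · right
    have : q = (r.dropUntil a ha).dropUntil b hmem :=
      path_unique hT _ _ hq ((hr.dropUntil ha).dropUntil hmem)
    rw [this, hpd]
    exact Walk.edges_dropUntil_subset _ hmem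
  · left
    have : p = (r.dropUntil b hb).dropUntil a hmem :=
      path_unique hT _ _ hp ((hr.dropUntil hb).dropUntil hmem)
    rw [this, hqd]
    exact Walk.edges_dropUntil_subset _ hmem

private lemma key {X M : Type} (T : RootedTree X) (lam : Sym2 T.V → Option M)
    (eps : X → X → Option M) (hex : Explains T lam eps)
    {z z' x : X} (hzx : z ≠ x) (hz'x : z' ≠ x) {m m' : M}
    (h1 : eps z x = some m) (h2 : eps z' x = some m') : m = m' := by
  haveI := Classical.decEq T.V
  obtain ⟨l, hl, p, hp, e, hep, hlab⟩ := ((hex z x hzx).1 m).mp h1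
  obtain ⟨l', hl', p', hp', e', hep', hlab'⟩ := ((hex z' x hz'x).1 m').mp h2
  have hancl : T.Anc l (T.leaf x) := hl.1 (T.leaf x) (by simp)
  have hancl' : T.Anc l' (T.leaf x) := hl'.1 (T.leaf x) (by simp)
  obtain ⟨w⟩ := T.isTree.isConnected.preconnected T.root (T.leaf x)
  set r := w.toPath.1 with hrdef
  have hr : r.IsPath := w.toPath.2
  have hlr : l ∈ r.support := hancl r hr
  have hl'r : l' ∈ r.support := hancl' r hr
  rcases nested T.isTree r hr hlr hl'r p p' hp hp' with hsub | hsub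
  · -- p.edges ⊆ p'.edges : e ∈ p'.edges, so eps z' x = some m
    have : eps z' x = some m :=
      ((hex z' x hz'x).1 m).mpr ⟨l', hl', p', hp', e, hsub hep, hlab⟩
    rw [this] at h2
    exact Option.some_injective _ h2
  · have : eps z x = some m' :=
      ((hex z x hzx).1 m').mpr ⟨l, hl, p, hp, e', hsub hep', hlab'⟩
    rw [this] at h1
    exact (Option.some_injective _ h1).symm

theorem stmt1 {X M : Type} [Fintype X] [Fintype M] [Nonempty M]
    (hX : 1 < Fintype.card X)
    (eps : X → X → Option M)
    (hattain : ∀ m : M, ∃ x y : X, x ≠ y ∧ eps x y = some m)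
    (htl : TreeLike eps) :
    ∀ m : M, (Xset eps (some m)).Nonempty ∧
      Xset eps (some m) = {x : X | ∃ z : X, z ≠ x ∧ eps z x = some m} := by
  obtain ⟨T, lam, hphy, hex⟩ := htl
  intro m
  have hmem : ∀ x : X, (∃ z, z ≠ x ∧ eps z x = some m) → x ∈ Xset eps (some m) := by
    rintro x ⟨z, hzx, hz⟩
    refine ⟨z, hzx, hz, fun z' hz'z hz'x => ?_⟩
    cases hv : eps z' x with
    | none => exact Or.inl rfl
    | some m' => exact Or.inr (by rw [key T lam eps hex hz'x hzx hv hz])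
  constructor
  · obtain ⟨a, b, hab, h⟩ := hattain m
    exact ⟨b, hmem b ⟨a, hab, h⟩⟩
  · ext x
    constructor
    · rintro ⟨z, hz, heq, -⟩
      exact ⟨z, hz, heq⟩
    · exact hmem x


end GenFitch
end

section
/- Let ε be a tree-like map with M = {1, …, |M|}. Then the sets X_1, X_2, …, X_{|M|}, X_⊗ form a quasi-partition of X, i.e., they are pairwise disjoint, their union is X, and at most one of them (namely X_⊗) is empty. -/
namespace GenFitch

theorem disjoint_Xset {X M : Type} (eps : X → X → Option M) {s t : Option M} (hst : s ≠ t) :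
    Disjoint (Xset eps s) (Xset eps t) := by
  rw [Set.disjoint_left]
  rintro x ⟨z, hzx, hzs, hs⟩ ⟨w, hwx, hwt, ht⟩
  obtain rfl | hzw := eq_or_ne z w
  · exact hst (hzs.symm.trans hwt)
  · have hw := hs w hzw.symm hwx
    have hz := ht z hzw hzx
    rw [hwt] at hw
    rw [hzs] at hz
    grind

theorem RootedTree.edges_subset_or_subset_of_anc {X : Type} {T : RootedTree X} {l l' v : T.V}
    (hl : T.Anc l v) (hl' : T.Anc l' v) {p : T.G.Walk l v} (hp : p.IsPath)
    {p' : T.G.Walk l' v} (hp' : p'.IsPath) : p.edges ⊆ p'.edges ∨ p'.edges ⊆ p.edges := by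
  classical
  obtain ⟨R, hR⟩ := (T.isTree.connected.preconnected T.root v).exists_isPath
  have drop_eq : ∀ {u : T.V} (hu : T.Anc u v) {q : T.G.Walk u v}, q.IsPath →
      q = R.dropUntil u (hu R hR) := fun hu q hq =>
    congrArg Subtype.val <|
      (T.isTree.isAcyclic.subsingleton_path _ _).elim ⟨q, hq⟩ ⟨_, hR.dropUntil (hu R hR)⟩
  rw [drop_eq hl hp, drop_eq hl' hp']
  exact (List.suffix_or_suffix_of_suffix (R.edges_dropUntil_suffix_edges _)
    (R.edges_dropUntil_suffix_edges _)).imp List.IsSuffix.subset List.IsSuffix.subset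

namespace Explains

variable {X M : Type} {T : RootedTree X} {lam : Sym2 T.V → Option M} {eps : X → X → Option M}

/-- The paths from `lca(z,x)` to `x` are all suffixes of the path from the root to `x`,
so they are nested and an `M`-label on the shorter one also lies on the longer one. -/
theorem label_eq (hex : Explains T lam eps) {x z z' : X} (hz : z ≠ x) (hz' : z' ≠ x)
    {m m' : M} (h : eps z x = some m) (h' : eps z' x = some m') : m = m' := by
  obtain ⟨l, hl, p, hp, e, he, hem⟩ := ((hex z x hz).1 m).1 h
  obtain ⟨l', hl', p', hp', e', he', hem'⟩ := ((hex z' x hz').1 m').1 h'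
  rcases RootedTree.edges_subset_or_subset_of_anc (hl.1 _ (by simp)) (hl'.1 _ (by simp))
    hp hp' with hsub | hsub
  · have : eps z' x = some m := ((hex z' x hz').1 m).2 ⟨l', hl', p', hp', e, hsub he, hem⟩
    exact Option.some.inj (this.symm.trans h')
  · have : eps z x = some m' := ((hex z x hz).1 m').2 ⟨l, hl, p, hp, e', hsub he', hem'⟩
    exact Option.some.inj (h.symm.trans this)

theorem mem_Xset_some (hex : Explains T lam eps) {x z : X} (hzx : z ≠ x) {m : M}
    (h : eps z x = some m) : x ∈ Xset eps (some m) := by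
  refine ⟨z, hzx, h, fun z' _ hz'x => ?_⟩
  cases h' : eps z' x with
  | none => exact Or.inl rfl
  | some m' => exact Or.inr (congrArg some (hex.label_eq hzx hz'x h h').symm)

theorem iUnion_Xset_eq_univ [Nontrivial X] (hex : Explains T lam eps) :
    (⋃ s : Option M, Xset eps s) = Set.univ := by
  refine Set.eq_univ_of_forall fun x => Set.mem_iUnion.2 ?_
  by_cases hlabel : ∃ z, z ≠ x ∧ ∃ m : M, eps z x = some m
  · obtain ⟨z, hzx, m, hm⟩ := hlabel
    exact ⟨some m, hex.mem_Xset_some hzx hm⟩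
  · have hnone : ∀ z, z ≠ x → eps z x = none := fun z hzx =>
      Option.eq_none_iff_forall_ne_some.2 fun m hm => hlabel ⟨z, hzx, m, hm⟩
    obtain ⟨z, hzx⟩ := exists_ne x
    exact ⟨none, z, hzx, hnone z hzx, fun z' _ hz'x => Or.inl (hnone z' hz'x)⟩

end Explains

theorem stmt2_general {X M : Type} [Fintype X]
    (hX : 1 < Fintype.card X)
    (eps : X → X → Option M)
    (hattain : ∀ m : M, ∃ x y : X, x ≠ y ∧ eps x y = some m)
    (htl : TreeLike eps) :
    (∀ s t : Option M, s ≠ t → Disjoint (Xset eps s) (Xset eps t)) ∧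
    (⋃ s : Option M, Xset eps s) = Set.univ ∧
    (∀ m : M, (Xset eps (some m)).Nonempty) := by
  obtain ⟨T, lam, -, hex⟩ := htl
  have : Nontrivial X := Fintype.one_lt_card_iff_nontrivial.1 hX
  refine ⟨fun s t => disjoint_Xset eps, hex.iUnion_Xset_eq_univ, fun m => ?_⟩
  obtain ⟨z, x, hzx, hm⟩ := hattain m
  exact ⟨x, hex.mem_Xset_some hzx hm⟩

theorem stmt2 {X M : Type} [Fintype X] [Fintype M] [Nonempty M]
    (hX : 1 < Fintype.card X)
    (eps : X → X → Option M)
    (hattain : ∀ m : M, ∃ x y : X, x ≠ y ∧ eps x y = some m)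
    (htl : TreeLike eps) :
    (∀ s t : Option M, s ≠ t → Disjoint (Xset eps s) (Xset eps t)) ∧
    (⋃ s : Option M, Xset eps s) = Set.univ ∧
    (∀ m : M, (Xset eps (some m)).Nonempty) :=
  stmt2_general hX eps hattain htl

end GenFitch
end

section
/- Let ε be tree-like, explained by (T,λ), and let m ∈ M. Then on each path of T corresponding to an edge of the restriction T|X_m at most one label from M occurs (so the restricted labeling λ|X_m is well-defined), the tree (T|X_m, λ|X_m) explains the restriction of ε to pairs of distinct elements of X_m, and consequently G_m = (X_m, E_m) is a simple Fitch graph. -/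
/-!
Every vertex of `T|X_m` is `lca(y, z)` for leaves `y, z ∈ X_m`. If `u = lca(y, z)` lies strictly
above `v = lca(a, b)`, then `u = lca(y, a)` or `u = lca(z, a)`, so an `M`-label on the path from
`u` to `v` lies on the path from `lca(w, a)` to `a` for some `w ∈ X_m`, i.e. it is `ε(w, a)`. All
in-arcs of `a ∈ X_m` labelled in `M` carry `m`, so the label is `m`.

The restriction is realised as the Hasse diagram of the ancestor order on these least common
ancestors. A path in it from an ancestor to a descendant carries exactly the labels of the
corresponding path of `T`, so it explains `ε` on `X_m`; forgetting which symbol of `M` an edge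
carries gives a `{1, ⊗}`-labelled tree explaining `G_m`.
-/

namespace SimpleGraph

variable {V : Type*} {G : SimpleGraph V}

theorem Walk.IsPath.exists_adj_adj_of_mem_support {u v w : V} {p : G.Walk u v} (hp : p.IsPath)
    (hw : w ∈ p.support) (hwu : w ≠ u) (hwv : w ≠ v) :
    ∃ a b, a ≠ b ∧ G.Adj w a ∧ G.Adj w b := by
  obtain ⟨n, rfl, hn⟩ := Walk.mem_support_iff_exists_getVert.mp hw
  have hn0 : n ≠ 0 := by rintro rfl; exact hwu (Walk.getVert_zero p)
  have hnl : n ≠ p.length := by rintro rfl; exact hwv (Walk.getVert_length p)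
  refine ⟨p.getVert (n - 1), p.getVert (n + 1), fun h => ?_, ?_, p.adj_getVert_succ (by omega)⟩
  · have := hp.getVert_injOn (show n - 1 ≤ p.length by omega) (show n + 1 ≤ p.length by omega) h
    omega
  · have := p.adj_getVert_succ (i := n - 1) (by omega)
    rwa [Nat.sub_add_cancel (by omega), G.adj_comm] at this

/-- A vertex of maximal rank on a cycle would have two distinct neighbors of smaller rank. -/
theorem isAcyclic_of_rank (f : V → ℕ) (hne : ∀ u v, G.Adj u v → f u ≠ f v)
    (hlower : ∀ u v w, G.Adj u v → G.Adj u w → f v < f u → f w < f u → v = w) :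
    G.IsAcyclic := by
  classical
  intro v c hc
  obtain ⟨u, hu, hmax⟩ := Set.exists_max_image {x | x ∈ c.support} f c.support.finite_toSet
    ⟨v, c.start_mem_support⟩
  have hc' := hc.rotate hu
  have hlt : ∀ i, G.Adj u ((c.rotate u hu).getVert i) → f ((c.rotate u hu).getVert i) < f u :=
    fun i hadj => (hmax _ ((c.mem_support_rotate_iff u hu).mp
      ((c.rotate u hu).getVert_mem_support i))).lt_of_ne (hne _ _ hadj).symm
  have hsnd := (c.rotate u hu).adj_snd hc'.not_nil
  have hpen := ((c.rotate u hu).adj_penultimate hc'.not_nil).symm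
  exact hc'.snd_ne_penultimate (hlower u _ _ hsnd hpen (hlt 1 hsnd) (hlt _ hpen))

end SimpleGraph

namespace GenFitch

open SimpleGraph

namespace RootedTree

variable {X : Type} {T : RootedTree X}

instance (T : RootedTree X) : Fintype T.V := T.fintypeV

variable (T) in
noncomputable def path (u v : T.V) : T.G.Walk u v := (T.isTree.existsUnique_path u v).choose

variable (T) in
lemma path_isPath (u v : T.V) : (T.path u v).IsPath :=
  (T.isTree.existsUnique_path u v).choose_spec.1

lemma eq_path {u v : T.V} {p : T.G.Walk u v} (hp : p.IsPath) : p = T.path u v :=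
  (T.isTree.existsUnique_path u v).unique hp (T.path_isPath u v)

@[simp] lemma path_self (u : T.V) : T.path u u = .nil := (eq_path .nil).symm

lemma edges_path_of_adj {u v : T.V} (h : T.G.Adj u v) : (T.path u v).edges = [s(u, v)] := by
  rw [← eq_path (Walk.IsPath.of_adj h)]
  rfl

lemma mem_edges_path_comm {u v : T.V} {e : Sym2 T.V} :
    e ∈ (T.path u v).edges ↔ e ∈ (T.path v u).edges := by
  rw [← eq_path (T.path_isPath u v).reverse, Walk.edges_reverse, List.mem_reverse]

lemma anc_iff_mem_support {u v : T.V} : T.Anc u v ↔ u ∈ (T.path T.root v).support :=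
  ⟨fun h => h _ (T.path_isPath _ _), fun h _ hp => eq_path hp ▸ h⟩

lemma anc_refl (v : T.V) : T.Anc v v := fun p _ => p.end_mem_support

lemma path_root_append {u v : T.V} (h : T.Anc u v) :
    (T.path T.root u).append (T.path u v) = T.path T.root v := by
  classical
  have hu := anc_iff_mem_support.mp h
  have hp := T.path_isPath T.root v
  conv_rhs => rw [← (T.path T.root v).take_spec hu]
  rw [eq_path (hp.takeUntil hu), eq_path (hp.dropUntil hu)]

lemma anc_trans {u v w : T.V} (huv : T.Anc u v) (hvw : T.Anc v w) : T.Anc u w := by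
  rw [anc_iff_mem_support, ← path_root_append hvw, Walk.mem_support_append_iff]
  exact Or.inl (anc_iff_mem_support.mp huv)

lemma anc_or_anc_of_anc {u v w : T.V} (hu : T.Anc u w) (hv : T.Anc v w) :
    T.Anc u v ∨ T.Anc v u := by
  have hprefix : ∀ {a}, T.Anc a w →
      (T.path T.root a).support <+: (T.path T.root w).support := fun ha => by
    rw [← path_root_append ha, Walk.support_append]
    exact List.prefix_append _ _
  refine (List.prefix_or_prefix_of_prefix (hprefix hu) (hprefix hv)).imp (fun h => ?_) (fun h => ?_)
  all_goals exact anc_iff_mem_support.mpr (h.subset (Walk.end_mem_support _))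

lemma path_append_of_anc {u v w : T.V} (huv : T.Anc u v) (hvw : T.Anc v w) :
    (T.path u v).append (T.path v w) = T.path u w := by
  apply eq_path
  have hp := T.path_isPath T.root w
  rw [← path_root_append hvw, ← path_root_append huv, ← Walk.append_assoc] at hp
  exact hp.of_append_right

lemma edges_path_subset_left {u v w : T.V} (huv : T.Anc u v) (hvw : T.Anc v w) :
    (T.path u v).edges ⊆ (T.path u w).edges := by
  rw [← path_append_of_anc huv hvw, Walk.edges_append]
  exact List.subset_append_left _ _

lemma edges_path_subset_right {u v w : T.V} (huv : T.Anc u v) (hvw : T.Anc v w) :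
    (T.path v w).edges ⊆ (T.path u w).edges := by
  rw [← path_append_of_anc huv hvw, Walk.edges_append]
  exact List.subset_append_right _ _

lemma anc_or_anc_of_adj {a b : T.V} (h : T.G.Adj a b) : T.Anc a b ∨ T.Anc b a := by
  by_cases hb : b ∈ (T.path T.root a).support
  · exact Or.inr (anc_iff_mem_support.mpr hb)
  · left
    rw [anc_iff_mem_support, ← eq_path ((T.path_isPath T.root a).concat hb h),
      Walk.support_concat]
    exact List.mem_append_left _ (Walk.end_mem_support _)

variable (T) in
noncomputable def depth (v : T.V) : ℕ := (T.path T.root v).length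

lemma depth_lt_of_anc {u v : T.V} (h : T.Anc u v) (hne : u ≠ v) : T.depth u < T.depth v := by
  have hlen : (T.path u v).length ≠ 0 := fun h0 => hne (Walk.eq_of_length_eq_zero h0)
  have := congrArg Walk.length (path_root_append h)
  rw [Walk.length_append] at this
  unfold depth
  omega

lemma anc_antisymm {u v : T.V} (huv : T.Anc u v) (hvu : T.Anc v u) : u = v := by
  by_contra hne
  exact (depth_lt_of_anc huv hne).asymm (depth_lt_of_anc hvu (Ne.symm hne))

lemma anc_of_depth_le {u v w : T.V} (hu : T.Anc u w) (hv : T.Anc v w)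
    (h : T.depth v ≤ T.depth u) : T.Anc v u := by
  rcases anc_or_anc_of_anc hu hv with huv | hvu
  · obtain rfl | hne := eq_or_ne u v
    · exact anc_refl u
    · exact absurd h (depth_lt_of_anc huv hne).not_ge
  · exact hvu

lemma eq_leaf_of_leaf_anc (hroot : ¬ T.IsLeaf T.root) {x : X} {v : T.V}
    (h : T.Anc (T.leaf x) v) : v = T.leaf x := by
  by_contra hne
  obtain ⟨a, b, hab, ha, hb⟩ := (T.path_isPath T.root v).exists_adj_adj_of_mem_support
    (anc_iff_mem_support.mp h) (fun h' => hroot ⟨x, h'⟩) (Ne.symm hne)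
  have hle := (T.leaf_iff _).mp ⟨x, rfl⟩
  have : 1 < (T.G.neighborSet (T.leaf x)).ncard :=
    (Set.one_lt_ncard (Set.toFinite _)).mpr ⟨a, ha, b, hb, hab⟩
  omega

lemma exists_isLcaSet {S : Set T.V} (hS : S.Nonempty) : ∃ l, T.IsLcaSet l S := by
  obtain ⟨l, hl, hmax⟩ := Set.exists_max_image {u | ∀ v ∈ S, T.Anc u v} T.depth
    (Set.toFinite _) ⟨T.root, fun _ _ p _ => p.start_mem_support⟩
  obtain ⟨s, hs⟩ := hS
  exact ⟨l, hl, fun u hu => anc_of_depth_le (hl s hs) (hu s hs) (hmax u hu)⟩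

lemma IsLcaSet.unique {l l' : T.V} {S : Set T.V} (h : T.IsLcaSet l S)
    (h' : T.IsLcaSet l' S) : l = l' :=
  anc_antisymm (h'.2 l h.1) (h.2 l' h'.1)

lemma isLcaSet_pair_iff {l a b : T.V} :
    T.IsLcaSet l {a, b} ↔ T.Anc l a ∧ T.Anc l b ∧ ∀ u, T.Anc u a → T.Anc u b → T.Anc u l := by
  simp [IsLcaSet, and_assoc]

lemma IsLcaSet.anc_left {l a b : T.V} (h : T.IsLcaSet l {a, b}) : T.Anc l a :=
  (isLcaSet_pair_iff.mp h).1

lemma IsLcaSet.anc_right {l a b : T.V} (h : T.IsLcaSet l {a, b}) : T.Anc l b :=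
  (isLcaSet_pair_iff.mp h).2.1

lemma isLcaSet_pair_self (v : T.V) : T.IsLcaSet v {v, v} :=
  isLcaSet_pair_iff.mpr ⟨anc_refl v, anc_refl v, fun _ h _ => h⟩

lemma exists_isLcaSet_pair (a b : T.V) : ∃ l, T.IsLcaSet l {a, b} :=
  exists_isLcaSet (Set.insert_nonempty _ _)

/-- The two candidates `lca(a, c)`, `lca(b, c)` are comparable; the higher one is a common
ancestor of `a`, `b`, `c`, hence equals `lca(a, b)`. -/
lemma IsLcaSet.pair_or_pair_of_anc {l a b c : T.V} (h : T.IsLcaSet l {a, b})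
    (hc : T.Anc l c) : T.IsLcaSet l {a, c} ∨ T.IsLcaSet l {b, c} := by
  obtain ⟨hla, hlb, hmin⟩ := isLcaSet_pair_iff.mp h
  obtain ⟨w₁, hw₁⟩ := exists_isLcaSet_pair a c
  obtain ⟨w₂, hw₂⟩ := exists_isLcaSet_pair b c
  obtain ⟨hw₁a, hw₁c, hw₁min⟩ := isLcaSet_pair_iff.mp hw₁
  obtain ⟨hw₂b, hw₂c, hw₂min⟩ := isLcaSet_pair_iff.mp hw₂
  rcases anc_or_anc_of_anc hw₁c hw₂c with h₁₂ | h₂₁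
  · left
    rwa [anc_antisymm (hw₁min l hla hc) (hmin w₁ hw₁a (anc_trans h₁₂ hw₂b))]
  · right
    rwa [anc_antisymm (hw₂min l hlb hc) (hmin w₂ (anc_trans h₂₁ hw₁a) hw₂b)]

variable (T) in
def CoversIn (K : Set T.V) (u v : T.V) : Prop :=
  T.Anc u v ∧ u ≠ v ∧ ∀ w ∈ K, T.Anc u w → T.Anc w v → w = u ∨ w = v

variable {K : Set T.V}

lemma CoversIn.anc_of_anc {p u v : T.V} (hpv : T.CoversIn K p v) (hu : u ∈ K)
    (huv : T.Anc u v) (hne : u ≠ v) : T.Anc u p := by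
  rcases anc_or_anc_of_anc huv hpv.1 with h | h
  · exact h
  · rcases hpv.2.2 u hu h huv with rfl | rfl
    · exact anc_refl _
    · exact absurd rfl hne

lemma CoversIn.unique {p q v : T.V} (hp : T.CoversIn K p v) (hq : T.CoversIn K q v)
    (hpK : p ∈ K) (hqK : q ∈ K) : p = q :=
  anc_antisymm (hq.anc_of_anc hpK hp.1 hp.2.1) (hp.anc_of_anc hqK hq.1 hq.2.1)

lemma exists_coversIn_of_anc {u v : T.V} (hu : u ∈ K) (huv : T.Anc u v) (hne : u ≠ v) :
    ∃ p ∈ K, T.CoversIn K p v ∧ T.Anc u p := by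
  obtain ⟨p, ⟨hpK, hpv, hpne⟩, hmax⟩ := Set.exists_max_image {p | p ∈ K ∧ T.Anc p v ∧ p ≠ v}
    T.depth (Set.toFinite _) ⟨u, hu, huv, hne⟩
  refine ⟨p, hpK, ⟨hpv, hpne, fun w hw hpw hwv => ?_⟩,
    anc_of_depth_le hpv huv (hmax u ⟨hu, huv, hne⟩)⟩
  by_cases hwv' : w = v
  · exact Or.inr hwv'
  · exact Or.inl (anc_antisymm (anc_of_depth_le hpv hwv (hmax w ⟨hw, hwv, hwv'⟩)) hpw)

lemma exists_coversIn_anc {v d : T.V} (hd : d ∈ K) (hvd : T.Anc v d) (hne : v ≠ d) :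
    ∃ c ∈ K, T.CoversIn K v c ∧ T.Anc c d := by
  obtain ⟨c, ⟨hcK, hvc, hcv, hcd⟩, hmin⟩ :=
    Set.exists_min_image {c | c ∈ K ∧ T.Anc v c ∧ c ≠ v ∧ T.Anc c d} T.depth (Set.toFinite _)
      ⟨d, hd, hvd, hne.symm, anc_refl d⟩
  refine ⟨c, hcK, ⟨hvc, hcv.symm, fun w hw hvw hwc => ?_⟩, hcd⟩
  by_cases hwv : w = v
  · exact Or.inl hwv
  · have hwd := anc_trans hwc hcd
    exact Or.inr (anc_antisymm hwc (anc_of_depth_le hwd hcd (hmin w ⟨hw, hvw, hwv, hwd⟩)))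

variable (K) in
def hasseGraph : SimpleGraph K where
  Adj a b := T.CoversIn K a b ∨ T.CoversIn K b a
  symm := ⟨fun _ _ => Or.symm⟩
  loopless := ⟨fun _ h => h.elim (fun h => h.2.1 rfl) (fun h => h.2.1 rfl)⟩

lemma exists_hasseGraph_path_to_root {r : T.V} (hr : r ∈ K) (hrK : ∀ v ∈ K, T.Anc r v)
    (b : K) :
    ∃ w : (hasseGraph K).Walk b ⟨r, hr⟩, w.IsPath ∧ ∀ c : K, c ∈ w.support ↔ T.Anc c b := by
  generalize hd : T.depth b = d
  induction d using Nat.strong_induction_on generalizing b with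
  | _ d ih =>
  by_cases hbr : (b : T.V) = r
  · obtain rfl : b = ⟨r, hr⟩ := Subtype.ext hbr
    refine ⟨.nil, .nil, fun c => ?_⟩
    rw [Walk.support_nil, List.mem_singleton]
    exact ⟨fun h => h ▸ anc_refl _, fun h => Subtype.ext (anc_antisymm h (hrK c c.2))⟩
  · obtain ⟨p, hpK, hpb, -⟩ := exists_coversIn_of_anc hr (hrK b b.2) (Ne.symm hbr)
    obtain ⟨w, hw, hsupp⟩ := ih _ (hd ▸ depth_lt_of_anc hpb.1 hpb.2.1) ⟨p, hpK⟩ rfl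
    have hadj : (hasseGraph K).Adj b ⟨p, hpK⟩ := Or.inr hpb
    refine ⟨.cons hadj w, hw.cons fun hb => hpb.2.1 (anc_antisymm hpb.1 ((hsupp b).mp hb)),
      fun c => ?_⟩
    rw [Walk.support_cons, List.mem_cons, hsupp]
    constructor
    · rintro (rfl | hcp)
      · exact anc_refl _
      · exact anc_trans hcp hpb.1
    · intro hcb
      by_cases hcb' : c = b
      · exact Or.inl hcb'
      · exact Or.inr (hpb.anc_of_anc c.2 hcb fun h => hcb' (Subtype.ext h))

lemma hasseGraph_isTree {r : T.V} (hr : r ∈ K) (hrK : ∀ v ∈ K, T.Anc r v) :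
    (hasseGraph K).IsTree := by
  have hlt : ∀ {a b : K}, (hasseGraph K).Adj a b → T.depth b < T.depth a → T.CoversIn K b a :=
    fun hab hd => hab.resolve_left fun h => (depth_lt_of_anc h.1 h.2.1).not_gt hd
  refine ⟨(connected_iff_exists_forall_reachable _).mpr ⟨⟨r, hr⟩, fun b =>
    ⟨(exists_hasseGraph_path_to_root hr hrK b).choose.reverse⟩⟩, ?_⟩
  refine isAcyclic_of_rank (fun a : K => T.depth a) (fun a b hab => ?_)
    fun u v w huv huw hv hw => Subtype.ext ((hlt huv hv).unique (hlt huw hw) v.2 w.2)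
  rcases hab with h | h
  · exact (depth_lt_of_anc h.1 h.2.1).ne
  · exact (depth_lt_of_anc h.1 h.2.1).ne'

variable {Y : Set X}

variable (T Y) in
def pairLcaSet : Set T.V := {v | ∃ y z : Y, T.IsLcaSet v {T.leaf y, T.leaf z}}

lemma leaf_mem_pairLcaSet (y : Y) : T.leaf y ∈ T.pairLcaSet Y :=
  ⟨y, y, isLcaSet_pair_self _⟩

/-- A vertex of `pairLcaSet` of minimal depth is an ancestor of every leaf in `Y`. -/
lemma exists_isLcaSet_leaves_mem_pairLcaSet (hY : Y.Nonempty) :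
    ∃ r ∈ T.pairLcaSet Y, T.IsLcaSet r {v | ∃ y : Y, v = T.leaf y} := by
  obtain ⟨r, hrK, hmin⟩ := Set.exists_min_image (T.pairLcaSet Y) T.depth (Set.toFinite _)
    ⟨_, leaf_mem_pairLcaSet ⟨hY.some, hY.some_mem⟩⟩
  obtain ⟨a, b, hab⟩ := id hrK
  refine ⟨r, hrK, ?_, fun u hu => (isLcaSet_pair_iff.mp hab).2.2 u (hu _ ⟨a, rfl⟩) (hu _ ⟨b, rfl⟩)⟩
  rintro _ ⟨y, rfl⟩
  obtain ⟨w, hw⟩ := exists_isLcaSet_pair (T.leaf a) (T.leaf y)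
  exact anc_trans (anc_of_depth_le hw.anc_left hab.anc_left (hmin w ⟨a, y, hw⟩)) hw.anc_right

variable (T Y) in
noncomputable def restrictRoot (hY : Y.Nonempty) : T.V :=
  (exists_isLcaSet_leaves_mem_pairLcaSet hY).choose

lemma restrictRoot_mem (hY : Y.Nonempty) : T.restrictRoot Y hY ∈ T.pairLcaSet Y :=
  (exists_isLcaSet_leaves_mem_pairLcaSet hY).choose_spec.1

lemma isLcaSet_restrictRoot (hY : Y.Nonempty) :
    T.IsLcaSet (T.restrictRoot Y hY) {v | ∃ y : Y, v = T.leaf y} :=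
  (exists_isLcaSet_leaves_mem_pairLcaSet hY).choose_spec.2

lemma restrictRoot_anc (hY : Y.Nonempty) {v : T.V} (hv : v ∈ T.pairLcaSet Y) :
    T.Anc (T.restrictRoot Y hY) v := by
  obtain ⟨y, z, hyz⟩ := hv
  have hroot := (isLcaSet_restrictRoot (T := T) hY).1
  exact (isLcaSet_pair_iff.mp hyz).2.2 _ (hroot _ ⟨y, rfl⟩) (hroot _ ⟨z, rfl⟩)

/-- Children of `v = lca(a, b)` towards `a` and towards `b` differ, as a common child would be a
common ancestor of `a` and `b` below `v`. -/
lemma exists_two_coversIn {v : T.V} (hv : v ∈ T.pairLcaSet Y) (hleaf : ∀ y : Y, T.leaf y ≠ v) :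
    ∃ c₁ ∈ T.pairLcaSet Y, ∃ c₂ ∈ T.pairLcaSet Y, c₁ ≠ c₂ ∧
      T.CoversIn (T.pairLcaSet Y) v c₁ ∧ T.CoversIn (T.pairLcaSet Y) v c₂ := by
  obtain ⟨a, b, hab⟩ := id hv
  obtain ⟨c₁, hc₁, hvc₁, hc₁a⟩ :=
    exists_coversIn_anc (leaf_mem_pairLcaSet a) hab.anc_left (hleaf a).symm
  obtain ⟨c₂, hc₂, hvc₂, hc₂b⟩ :=
    exists_coversIn_anc (leaf_mem_pairLcaSet b) hab.anc_right (hleaf b).symm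
  refine ⟨c₁, hc₁, c₂, hc₂, fun h => hvc₁.2.1 (anc_antisymm hvc₁.1 ?_), hvc₁, hvc₂⟩
  exact (isLcaSet_pair_iff.mp hab).2.2 c₁ hc₁a (h ▸ hc₂b)

lemma one_lt_ncard_neighborSet_hasseGraph (v : T.pairLcaSet Y)
    (hleaf : ∀ y : Y, T.leaf y ≠ v) :
    1 < ((hasseGraph (T.pairLcaSet Y)).neighborSet v).ncard := by
  obtain ⟨c₁, hc₁, c₂, hc₂, hne, hvc₁, hvc₂⟩ := exists_two_coversIn v.2 hleaf
  exact (Set.one_lt_ncard (Set.toFinite _)).mpr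
    ⟨⟨c₁, hc₁⟩, Or.inl hvc₁, ⟨c₂, hc₂⟩, Or.inl hvc₂, fun h => hne (congrArg Subtype.val h)⟩

/-- A leaf has no proper descendants, so its only neighbor in the Hasse diagram is its parent. -/
lemma hasseGraph_pairLcaSet_leaf_iff (hroot : ¬ T.IsLeaf T.root) (v : T.pairLcaSet Y) :
    (∃ y : Y, (⟨T.leaf y, leaf_mem_pairLcaSet y⟩ : T.pairLcaSet Y) = v) ↔
      ((hasseGraph (T.pairLcaSet Y)).neighborSet v).ncard ≤ 1 := by
  constructor
  · rintro ⟨y, rfl⟩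
    have hcov : ∀ c, (hasseGraph (T.pairLcaSet Y)).Adj ⟨T.leaf y, leaf_mem_pairLcaSet y⟩ c →
        T.CoversIn (T.pairLcaSet Y) c (T.leaf y) := fun c hc =>
      hc.resolve_left fun h => h.2.1 (eq_leaf_of_leaf_anc hroot h.1).symm
    exact (Set.ncard_le_one_iff (Set.toFinite _)).mpr fun hc hd =>
      Subtype.ext ((hcov _ hc).unique (hcov _ hd) (Subtype.prop _) (Subtype.prop _))
  · intro hle
    by_contra hleaf
    exact hle.not_gt (one_lt_ncard_neighborSet_hasseGraph v fun y h => hleaf ⟨y, Subtype.ext h⟩)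

variable (T Y) in
/-- The restriction `T|Y`: the Hasse diagram of the ancestor order on the least common
ancestors of pairs of leaves in `Y`. -/
@[reducible] noncomputable def restrict (hY : Y.Nonempty) (hroot : ¬ T.IsLeaf T.root) :
    RootedTree Y where
  V := T.pairLcaSet Y
  fintypeV := Fintype.ofFinite _
  G := hasseGraph (T.pairLcaSet Y)
  isTree := hasseGraph_isTree (restrictRoot_mem hY) fun _ => restrictRoot_anc hY
  root := ⟨T.restrictRoot Y hY, restrictRoot_mem hY⟩
  leaf y := ⟨T.leaf y, leaf_mem_pairLcaSet y⟩
  leaf_inj _ _ h := Subtype.ext (T.leaf_inj (congrArg Subtype.val h))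
  leaf_iff := hasseGraph_pairLcaSet_leaf_iff hroot

variable {hY : Y.Nonempty} {hroot : ¬ T.IsLeaf T.root}

lemma restrict_anc_iff (a b : T.pairLcaSet Y) :
    (T.restrict Y hY hroot).Anc a b ↔ T.Anc a b := by
  obtain ⟨w, hw, hsupp⟩ :=
    exists_hasseGraph_path_to_root (restrictRoot_mem hY) (fun _ => restrictRoot_anc hY) b
  rw [anc_iff_mem_support, ← eq_path (T := T.restrict Y hY hroot) hw.reverse,
    Walk.support_reverse, List.mem_reverse]
  exact hsupp a

lemma isRestriction_restrict :
    IsRestriction T Subtype.val (T.restrict Y hY hroot) Subtype.val where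
  inj := Subtype.val_injective
  leaf_map _ := rfl
  anc_iff := restrict_anc_iff
  image v := ⟨fun ⟨a, ha⟩ => ha ▸ a.2, fun hv => ⟨⟨v, hv⟩, rfl⟩⟩
  root_map := isLcaSet_restrictRoot hY

lemma restrict_phylo {y z : Y} (hyz : y ≠ z) : (T.restrict Y hY hroot).Phylo := by
  have hroot' : ¬ (T.restrict Y hY hroot).IsLeaf (T.restrict Y hY hroot).root := by
    rintro ⟨x, hx⟩
    have hx' : T.leaf x = T.restrictRoot Y hY := congrArg Subtype.val hx
    have hleaf : ∀ y' : Y, T.leaf y' = T.leaf x := fun y' =>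
      eq_leaf_of_leaf_anc hroot (hx' ▸ (isLcaSet_restrictRoot hY).1 _ ⟨y', rfl⟩)
    exact hyz (Subtype.ext (T.leaf_inj ((hleaf y).trans (hleaf z).symm)))
  refine ⟨hroot', one_lt_ncard_neighborSet_hasseGraph _ fun y h => hroot' ⟨y, Subtype.ext h⟩,
    fun (v : T.pairLcaSet Y) hv hvr => ?_⟩
  have hleaf : ∀ y : Y, T.leaf y ≠ v := fun y h => hv ⟨y, Subtype.ext h⟩
  obtain ⟨c₁, hc₁, c₂, hc₂, hne, hvc₁, hvc₂⟩ := exists_two_coversIn v.2 hleaf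
  obtain ⟨p, hp, hpv, -⟩ := exists_coversIn_of_anc (restrictRoot_mem hY) (restrictRoot_anc hY v.2)
    fun h => hvr (Subtype.ext h.symm)
  have hpc : ∀ {c}, T.CoversIn (T.pairLcaSet Y) v c → p ≠ c := fun hvc h =>
    hvc.2.1 (anc_antisymm hvc.1 (h ▸ hpv.1))
  exact (Set.two_lt_ncard (Set.toFinite _)).mpr ⟨⟨p, hp⟩, Or.inr hpv, ⟨c₁, hc₁⟩, Or.inl hvc₁,
    ⟨c₂, hc₂⟩, Or.inl hvc₂, fun h => hpc hvc₁ (congrArg Subtype.val h),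
    fun h => hpc hvc₂ (congrArg Subtype.val h), fun h => hne (congrArg Subtype.val h)⟩

lemma isLcaSet_restrict {v : T.V} {y z : Y} (h : T.IsLcaSet v {T.leaf y, T.leaf z}) :
    (T.restrict Y hY hroot).IsLcaSet ⟨v, y, z, h⟩
      {(T.restrict Y hY hroot).leaf y, (T.restrict Y hY hroot).leaf z} := by
  obtain ⟨h₁, h₂, h₃⟩ := isLcaSet_pair_iff.mp h
  refine isLcaSet_pair_iff.mpr ⟨(restrict_anc_iff _ _).mpr h₁, (restrict_anc_iff _ _).mpr h₂,
    fun u hu₁ hu₂ => (restrict_anc_iff _ _).mpr ?_⟩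
  exact h₃ u ((restrict_anc_iff _ _).mp hu₁) ((restrict_anc_iff _ _).mp hu₂)

lemma exists_mem_edges_restrict_path_iff {P' : Sym2 (T.pairLcaSet Y) → Prop}
    {P : Sym2 T.V → Prop}
    (hP : ∀ a b, (T.restrict Y hY hroot).G.Adj a b →
      (P' s(a, b) ↔ ∃ e ∈ (T.path a b).edges, P e))
    {a b : T.pairLcaSet Y} (hab : T.Anc a b) :
    (∃ e ∈ ((T.restrict Y hY hroot).path a b).edges, P' e) ↔
      ∃ e ∈ (T.path a b).edges, P e := by
  generalize hd : T.depth b = d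
  induction d using Nat.strong_induction_on generalizing b with
  | _ d ih =>
  obtain rfl | hne := eq_or_ne a b
  · simp
  obtain ⟨p, hpK, hpb, hap⟩ := exists_coversIn_of_anc a.2 hab fun h => hne (Subtype.ext h)
  set p' : T.pairLcaSet Y := ⟨p, hpK⟩
  have hadj : (T.restrict Y hY hroot).G.Adj p' b := Or.inl hpb
  rw [← path_append_of_anc ((restrict_anc_iff a p').mpr hap) ((restrict_anc_iff p' b).mpr hpb.1),
    ← path_append_of_anc hap hpb.1, Walk.edges_append, Walk.edges_append, edges_path_of_adj hadj]
  simp only [List.mem_append, List.mem_singleton, or_and_right, exists_or, exists_eq_left]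
  rw [ih _ (hd ▸ depth_lt_of_anc hpb.1 hpb.2.1) hap rfl, hP p' b hadj]

variable {M : Type} {lam : Sym2 T.V → Option M} {eps : X → X → Option M}

lemma pathHasLabel_iff_of_isLcaSet {l : T.V} {x y : X} {mm : M}
    (hl : T.IsLcaSet l {T.leaf x, T.leaf y}) :
    PathHasLabel T lam x y mm ↔ ∃ e ∈ (T.path l (T.leaf y)).edges, lam e = some mm := by
  constructor
  · rintro ⟨l', hl', p, hp, he⟩
    obtain rfl := hl'.unique hl
    rwa [eq_path hp] at he
  · exact fun he => ⟨l, hl, _, T.path_isPath _ _, he⟩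

lemma eps_eq_some_iff (hexp : Explains T lam eps) {l : T.V} {x y : X} (hxy : x ≠ y) {mm : M}
    (hl : T.IsLcaSet l {T.leaf x, T.leaf y}) :
    eps x y = some mm ↔ ∃ e ∈ (T.path l (T.leaf y)).edges, lam e = some mm :=
  ((hexp x y hxy).1 mm).trans (pathHasLabel_iff_of_isLcaSet hl)

/-- The path from the higher of `lca(x, y)`, `lca(x', y)` to `y` contains the other one. -/
lemma eq_of_eps_eq_some (hexp : Explains T lam eps) {x x' y : X} (hxy : x ≠ y) (hx'y : x' ≠ y)
    {m m' : M} (h : eps x y = some m) (h' : eps x' y = some m') : m = m' := by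
  obtain ⟨l, hl⟩ := exists_isLcaSet_pair (T.leaf x) (T.leaf y)
  obtain ⟨l', hl'⟩ := exists_isLcaSet_pair (T.leaf x') (T.leaf y)
  wlog hll' : T.Anc l l' generalizing x x' l l' m m'
  · exact (this hx'y hxy h' h l' hl' l hl
      ((anc_or_anc_of_anc hl.anc_right hl'.anc_right).resolve_left hll')).symm
  obtain ⟨e, he, hm'⟩ := (eps_eq_some_iff hexp hx'y hl').mp h'
  have := (eps_eq_some_iff hexp hxy hl).mpr
    ⟨e, edges_path_subset_right hll' hl'.anc_right he, hm'⟩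
  exact Option.some_injective _ (h.symm.trans this)

lemma mem_Xset_of_eps_eq_some (hexp : Explains T lam eps) {x y : X} (hxy : x ≠ y) {m : M}
    (h : eps x y = some m) : y ∈ Xset eps (some m) := by
  refine ⟨x, hxy, h, fun z _ hzy => ?_⟩
  rcases hz : eps z y with _ | m'
  · exact Or.inl rfl
  · exact Or.inr (congrArg some (eq_of_eps_eq_some hexp hzy hxy hz h))

lemma label_eq_of_mem_edges_path {m : M} (hexp : Explains T lam eps) {u v : T.V}
    (hu : u ∈ T.pairLcaSet (Xset eps (some m))) (hv : v ∈ T.pairLcaSet (Xset eps (some m)))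
    (huv : T.Anc u v) (hne : u ≠ v) {e : Sym2 T.V} (he : e ∈ (T.path u v).edges) {m' : M}
    (hlab : lam e = some m') : m' = m := by
  obtain ⟨y, z, hyz⟩ := hu
  obtain ⟨a, b, hab⟩ := hv
  have hva := hab.anc_left
  obtain ⟨w, hw⟩ : ∃ w : Xset eps (some m), T.IsLcaSet u {T.leaf w, T.leaf a} :=
    (hyz.pair_or_pair_of_anc (anc_trans huv hva)).elim (⟨y, ·⟩) (⟨z, ·⟩)
  have hwa : (w : X) ≠ a := fun h => hne <| by
    have hu' : u = T.leaf a := hw.unique (h ▸ isLcaSet_pair_self _)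
    exact anc_antisymm huv (hu' ▸ hva)
  have heps : eps w a = some m' :=
    (eps_eq_some_iff hexp hwa hw).mpr ⟨e, edges_path_subset_left huv hva he, hlab⟩
  obtain ⟨z', hz'a, hz', -⟩ := a.2
  exact eq_of_eps_eq_some hexp hwa hz'a heps hz'

theorem labels_eq_of_isRestriction {m : M} (hexp : Explains T lam eps)
    (T' : RootedTree (Xset eps (some m))) (ι : T'.V → T.V)
    (hres : IsRestriction T Subtype.val T' ι) (a b : T'.V) (hab : T'.G.Adj a b)
    (p : T.G.Walk (ι a) (ι b)) (hp : p.IsPath) (m₁ m₂ : M)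
    (h₁ : ∃ e ∈ p.edges, lam e = some m₁) (h₂ : ∃ e ∈ p.edges, lam e = some m₂) : m₁ = m₂ := by
  have hK : ∀ c, ι c ∈ T.pairLcaSet (Xset eps (some m)) := fun c => (hres.image _).mp ⟨c, rfl⟩
  have hne : ι a ≠ ι b := fun h => hab.ne (hres.inj h)
  suffices ∀ mm, (∃ e ∈ p.edges, lam e = some mm) → mm = m from
    (this m₁ h₁).trans (this m₂ h₂).symm
  rintro mm ⟨e, he, hmm⟩
  rw [eq_path hp] at he
  rcases anc_or_anc_of_adj hab with h | h
  · exact label_eq_of_mem_edges_path hexp (hK a) (hK b) ((hres.anc_iff a b).mp h) hne he hmm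
  · exact label_eq_of_mem_edges_path hexp (hK b) (hK a) ((hres.anc_iff b a).mp h) hne.symm
      (mem_edges_path_comm.mp he) hmm

lemma pathHasLabel_restrict_iff {lam' : Sym2 (T.pairLcaSet Y) → Option M}
    (hlab : ∀ a b, (T.restrict Y hY hroot).G.Adj a b → ∀ mm,
      (lam' s(a, b) = some mm ↔ ∃ e ∈ (T.path a b).edges, lam e = some mm))
    (y z : Y) (mm : M) :
    PathHasLabel (T.restrict Y hY hroot) lam' y z mm ↔ PathHasLabel T lam y z mm := by
  obtain ⟨l, hl⟩ := exists_isLcaSet_pair (T.leaf y) (T.leaf z)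
  rw [pathHasLabel_iff_of_isLcaSet hl,
    pathHasLabel_iff_of_isLcaSet (isLcaSet_restrict (hY := hY) (hroot := hroot) hl)]
  exact exists_mem_edges_restrict_path_iff (fun a b hab => hlab a b hab mm) hl.anc_right

variable (T) in
def pathLabels (lam : Sym2 T.V → Option M) (u v : T.V) : Set M :=
  {mm | ∃ e ∈ (T.path u v).edges, lam e = some mm}

lemma pathLabels_comm (u v : T.V) : T.pathLabels lam u v = T.pathLabels lam v u :=
  Set.ext fun _ => exists_congr fun _ => and_congr_left' mem_edges_path_comm

open Classical in
variable (K) in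
/-- The labeling `λ|K`; which label of the path is chosen is immaterial once the path carries at
most one label of `M`, as in `labels_eq_of_isRestriction`. -/
noncomputable def restrictLabel (lam : Sym2 T.V → Option M) : Sym2 K → Option M :=
  Sym2.lift ⟨fun a b => if h : (T.pathLabels lam a b).Nonempty then some h.some else none,
    fun a b => by dsimp only; rw [pathLabels_comm]⟩

lemma restrictLabel_eq_some_iff {a b : K} {mm : M}
    (huniq : ∀ m₁ m₂, m₁ ∈ T.pathLabels lam a b → m₂ ∈ T.pathLabels lam a b → m₁ = m₂) :
    restrictLabel K lam s(a, b) = some mm ↔ mm ∈ T.pathLabels lam a b := by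
  rw [restrictLabel, Sym2.lift_mk]
  dsimp only
  split_ifs with h
  · rw [Option.some_inj]
    exact ⟨fun h' => h' ▸ h.some_mem, fun hm => huniq _ _ h.some_mem hm⟩
  · exact iff_of_false id fun hm => h ⟨mm, hm⟩

end RootedTree

lemma Explains.of_pathHasLabel_iff {X Y M : Type} {T : RootedTree X} {lam : Sym2 T.V → Option M}
    {eps : X → X → Option M} {T' : RootedTree Y} {lam' : Sym2 T'.V → Option M} {f : Y → X}
    (hf : f.Injective)
    (h : ∀ y z mm, PathHasLabel T' lam' y z mm ↔ PathHasLabel T lam (f y) (f z) mm)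
    (hexp : Explains T lam eps) : Explains T' lam' (fun y z => eps (f y) (f z)) := by
  intro y z hyz
  simp only [h]
  exact hexp _ _ (hf.ne hyz)

theorem isFitchGraph_of_explains {X M : Type} {T : RootedTree X} {lam : Sym2 T.V → Option M}
    {eps : X → X → Option M} (hT : T.Phylo) (hexp : Explains T lam eps) :
    IsFitchGraph X (fun x y => eps x y ≠ none) := by
  refine Or.inr ⟨T, fun e => (lam e).map fun _ => (), hT, fun x y hxy => ?_⟩
  show ¬eps x y = none ↔ _
  rw [(hexp x y hxy).2, not_forall_not]
  constructor
  · rintro ⟨mm, l, hl, p, hp, e, he, hlab⟩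
    exact ⟨l, hl, p, hp, e, he, by simp only [hlab, Option.map_some]⟩
  · rintro ⟨l, hl, p, hp, e, he, hlab⟩
    obtain ⟨mm, hmm, -⟩ := Option.map_eq_some_iff.mp hlab
    exact ⟨mm, l, hl, p, hp, e, he, hmm⟩

open GenFitch.RootedTree in
theorem stmt5_general {X M : Type}
    (eps : X → X → Option M)
    (hattain : ∀ m : M, ∃ x y : X, x ≠ y ∧ eps x y = some m)
    (T : RootedTree X) (lam : Sym2 T.V → Option M)
    (hphylo : T.Phylo) (hexp : Explains T lam eps) (m : M) :
    (∀ (T' : RootedTree (↥(Xset eps (some m)))) (ι : T'.V → T.V),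
        IsRestriction T Subtype.val T' ι →
        ∀ a b : T'.V, T'.G.Adj a b →
          ∀ p : T.G.Walk (ι a) (ι b), p.IsPath →
            ∀ m₁ m₂ : M, (∃ e ∈ p.edges, lam e = some m₁) →
              (∃ e ∈ p.edges, lam e = some m₂) → m₁ = m₂) ∧
    (∃ (T' : RootedTree (↥(Xset eps (some m)))) (ι : T'.V → T.V)
        (lam' : Sym2 T'.V → Option M),
        IsRestriction T Subtype.val T' ι ∧
        (∀ a b : T'.V, T'.G.Adj a b →
          ∀ p : T.G.Walk (ι a) (ι b), p.IsPath →
            ∀ mm : M, (lam' s(a, b) = some mm ↔ ∃ e ∈ p.edges, lam e = some mm)) ∧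
        Explains T' lam' (fun y z => eps y.1 z.1)) ∧
    IsFitchGraph (↥(Xset eps (some m))) (fun x y => eps x.1 y.1 ≠ none) := by
  obtain ⟨x, y, hxy, hm⟩ := hattain m
  have hY : (Xset eps (some m)).Nonempty := ⟨y, mem_Xset_of_eps_eq_some hexp hxy hm⟩
  set T' := T.restrict (Xset eps (some m)) hY hphylo.1
  have huniq := labels_eq_of_isRestriction (m := m) hexp
  have hres : IsRestriction T Subtype.val T' Subtype.val := isRestriction_restrict
  have hlab : ∀ a b, T'.G.Adj a b → ∀ mm, (restrictLabel _ lam s(a, b) = some mm ↔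
      ∃ e ∈ (T.path a b).edges, lam e = some mm) := fun a b hab _ =>
    restrictLabel_eq_some_iff (huniq T' _ hres a b hab _ (T.path_isPath _ _))
  have hexp' : Explains T' (restrictLabel _ lam) (fun y z => eps y.1 z.1) :=
    hexp.of_pathHasLabel_iff Subtype.val_injective (pathHasLabel_restrict_iff hlab)
  refine ⟨huniq, ⟨T', Subtype.val, _, hres, fun a b hab p hp mm => ?_, hexp'⟩, ?_⟩
  · rw [eq_path hp]
    exact hlab a b hab mm
  · rcases subsingleton_or_nontrivial (Xset eps (some m)) with hsub | ⟨y, z, hyz⟩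
    · exact Or.inl hsub
    · exact isFitchGraph_of_explains (restrict_phylo hyz) hexp'

theorem stmt5 {X M : Type} [Fintype X] [Fintype M] [Nonempty M]
    (hX : 1 < Fintype.card X)
    (eps : X → X → Option M)
    (hattain : ∀ m : M, ∃ x y : X, x ≠ y ∧ eps x y = some m)
    (T : RootedTree X) (lam : Sym2 T.V → Option M)
    (hphylo : T.Phylo) (hexp : Explains T lam eps) (m : M) :
    (∀ (T' : RootedTree (↥(Xset eps (some m)))) (ι : T'.V → T.V),
        IsRestriction T Subtype.val T' ι →
        ∀ a b : T'.V, T'.G.Adj a b →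
          ∀ p : T.G.Walk (ι a) (ι b), p.IsPath →
            ∀ m₁ m₂ : M, (∃ e ∈ p.edges, lam e = some m₁) →
              (∃ e ∈ p.edges, lam e = some m₂) → m₁ = m₂) ∧
    (∃ (T' : RootedTree (↥(Xset eps (some m)))) (ι : T'.V → T.V)
        (lam' : Sym2 T'.V → Option M),
        IsRestriction T Subtype.val T' ι ∧
        (∀ a b : T'.V, T'.G.Adj a b →
          ∀ p : T.G.Walk (ι a) (ι b), p.IsPath →
            ∀ mm : M, (lam' s(a, b) = some mm ↔ ∃ e ∈ p.edges, lam e = some mm)) ∧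
        Explains T' lam' (fun y z => eps y.1 z.1)) ∧
    IsFitchGraph (↥(Xset eps (some m))) (fun x y => eps x.1 y.1 ≠ none) :=
  stmt5_general eps hattain T lam hphylo hexp m

end GenFitch
end

section
/- A map ε: (X×X)∖Δ → M that assigns no pair the label ⊗ (with every m ∈ M attained by ε) is tree-like if and only if the following two conditions hold: (T1) the sets X_1, …, X_{|M|}, X_⊗ form a quasi-partition of X; and (T3) for all m ∈ M, x ∈ X_m and y ∈ X∖X_m it holds that ε(y,x) = m. -/
namespace GenFitch

/-!
Without `⊗`, the label of the arc `z → x` is the unique label on the path from `lca(z,x)` down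
to `x`. All these paths are suffixes of the path from the root to `x`, hence nested, so every
arc into `x` carries the same label. Conversely, if each `x` receives a single label from all
`z ≠ x`, the star tree whose leaf edge at `x` carries that label explains `eps`. Finally, in
the absence of `⊗`, (T1) together with (T3) says exactly that each `x` receives a single label.
-/

open SimpleGraph

def HasConstantInLabels {X M : Type} (eps : X → X → Option M) : Prop :=
  ∀ x z z' : X, z ≠ x → z' ≠ x → eps z x = eps z' x

namespace RootedTree

variable {X : Type} (T : RootedTree X)

lemma edges_isSuffix_of_anc {l v : T.V} (hl : T.Anc l v) {p : T.G.Walk l v} (hp : p.IsPath)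
    {r : T.G.Walk T.root v} (hr : r.IsPath) : p.edges <:+ r.edges := by
  classical
  have hmem := hl r hr
  obtain rfl : p = r.dropUntil l hmem :=
    congrArg Subtype.val ((T.isTree.isAcyclic.subsingleton_path l v).elim
      ⟨p, hp⟩ ⟨_, hr.dropUntil hmem⟩)
  exact r.edges_dropUntil_suffix_edges hmem

lemma edges_subset_or_subset_of_anc_s6 {l l' v : T.V} (hl : T.Anc l v) (hl' : T.Anc l' v)
    {p : T.G.Walk l v} (hp : p.IsPath) {p' : T.G.Walk l' v} (hp' : p'.IsPath) :
    p.edges ⊆ p'.edges ∨ p'.edges ⊆ p.edges := by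
  obtain ⟨r, hr, -⟩ := T.isTree.existsUnique_path T.root v
  exact (List.suffix_or_suffix_of_suffix (T.edges_isSuffix_of_anc hl hp hr)
    (T.edges_isSuffix_of_anc hl' hp' hr)).imp List.IsSuffix.subset List.IsSuffix.subset

end RootedTree

lemma Explains.hasConstantInLabels {X M : Type} {T : RootedTree X} {lam : Sym2 T.V → Option M}
    {eps : X → X → Option M} (hT : Explains T lam eps)
    (hnone : ∀ x y : X, x ≠ y → eps x y ≠ none) : HasConstantInLabels eps := by
  intro x z z' hz hz'
  obtain ⟨m, hm⟩ := Option.ne_none_iff_exists'.mp (hnone z x hz)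
  obtain ⟨m', hm'⟩ := Option.ne_none_iff_exists'.mp (hnone z' x hz')
  obtain ⟨l, hl, p, hp, e, he, hem⟩ := ((hT z x hz).1 m).mp hm
  obtain ⟨l', hl', p', hp', e', he', hem'⟩ := ((hT z' x hz').1 m').mp hm'
  rcases T.edges_subset_or_subset_of_anc_s6 (hl.1 _ (by simp)) (hl'.1 _ (by simp)) hp hp'
    with h | h
  · rw [hm, ((hT z' x hz').1 m).mpr ⟨l', hl', p', hp', e, h he, hem⟩]
  · rw [hm', ((hT z x hz).1 m').mpr ⟨l, hl, p, hp, e', h he', hem'⟩]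

section Star

variable {X : Type}

def starGraph (X : Type) : SimpleGraph (Option X) := SimpleGraph.fromRel fun a _ => a = none

lemma starGraph_adj_none_some (x : X) : (starGraph X).Adj none (some x) := by
  simp [starGraph]

lemma starGraph_eq_none_of_adj_some {x : X} {b : Option X} (h : (starGraph X).Adj (some x) b) :
    b = none := by
  simp only [starGraph, fromRel_adj, reduceCtorEq, false_or] at h
  exact h.2

lemma starGraph_neighborSet_none : (starGraph X).neighborSet none = Set.range some := by
  ext (_ | x) <;> simp [starGraph]

lemma starGraph_ncard_neighborSet_none : ((starGraph X).neighborSet none).ncard = Nat.card X := by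
  rw [starGraph_neighborSet_none, Set.ncard_range_of_injective (Option.some_injective X)]

lemma starGraph_neighborSet_some (x : X) : (starGraph X).neighborSet (some x) = {none} := by
  ext (_ | y) <;> simp [starGraph]

lemma starGraph_isTree : (starGraph X).IsTree := by
  have hreach (v : Option X) : (starGraph X).Reachable none v := by
    cases v with
    | none => rfl
    | some x => exact (starGraph_adj_none_some x).reachable
  refine ⟨⟨fun u v => (hreach u).symm.trans (hreach v)⟩, ?_⟩
  -- every edge is a bridge, since its leaf end `some x` has `none` as its only neighbour
  refine isAcyclic_iff_forall_adj_isBridge.mpr fun v w hvw =>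
    isBridge_iff_forall_walk_mem_edges.mpr fun p => ?_
  have hp : ¬ p.Nil := Walk.not_nil_of_ne hvw.ne
  cases v with
  | some x =>
    obtain rfl := starGraph_eq_none_of_adj_some hvw
    simpa only [starGraph_eq_none_of_adj_some (p.adj_snd hp)] using p.mk_start_snd_mem_edges hp
  | none =>
    cases w with
    | none => exact absurd rfl hvw.ne
    | some x =>
      simpa only [starGraph_eq_none_of_adj_some (p.adj_penultimate hp).symm]
        using p.mk_penultimate_end_mem_edges hp

noncomputable def starTree (X : Type) [Finite X] [Nontrivial X] : RootedTree X where
  V := Option X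
  fintypeV := Fintype.ofFinite _
  G := starGraph X
  isTree := starGraph_isTree
  root := none
  leaf := some
  leaf_inj := Option.some_injective X
  leaf_iff := by
    rintro (_ | x)
    · simpa [starGraph_ncard_neighborSet_none] using Finite.one_lt_card_iff_nontrivial.mpr ‹_›
    · simp [starGraph_neighborSet_some]

variable [Finite X] [Nontrivial X]

lemma starTree_phylo : (starTree X).Phylo := by
  refine ⟨fun ⟨x, h⟩ => Option.some_ne_none x h, ?_, fun v hv hroot => ?_⟩
  · change 2 ≤ ((starGraph X).neighborSet none).ncard
    exact starGraph_ncard_neighborSet_none (X := X) ▸ Finite.one_lt_card_iff_nontrivial.mpr ‹_›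
  · cases v with
    | none => exact absurd rfl hroot
    | some x => exact absurd ⟨x, rfl⟩ hv

lemma starTree_anc_some {u : Option X} {x : X} (h : (starTree X).Anc u (some x)) :
    u = none ∨ u = some x := by
  have hmem : u ∈ [none, some x] :=
    h (starGraph_adj_none_some x).toWalk (starGraph_adj_none_some x).isPath_toWalk
  simpa using hmem

lemma starTree_isLcaSet_iff {x y : X} (hxy : x ≠ y) {l : Option X} :
    (starTree X).IsLcaSet l {(starTree X).leaf x, (starTree X).leaf y} ↔ l = none := by
  have hcommon {u : Option X} (hu : ∀ v ∈ ({some x, some y} : Set (Option X)),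
      (starTree X).Anc u v) : u = none := by
    rcases starTree_anc_some (hu (some x) (by simp)) with h | rfl
    · exact h
    · exact (hxy (by simpa using starTree_anc_some (hu (some y) (by simp)))).elim
  refine ⟨fun h => hcommon h.1, ?_⟩
  rintro rfl
  refine ⟨fun v _ p _ => p.start_mem_support, fun u hu p _ => ?_⟩
  rw [hcommon hu]
  exact p.start_mem_support

def starLabeling {M : Type} (lab : X → Option M) : Sym2 (Option X) → Option M :=
  Sym2.lift ⟨fun a b => match a, b with
    | none, some x => lab x
    | some x, none => lab x
    | _, _ => none, by rintro (_ | _) (_ | _) <;> rfl⟩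

lemma starTree_pathHasLabel_iff {M : Type} (lab : X → Option M) {x y : X} (hxy : x ≠ y)
    (m : M) : PathHasLabel (starTree X) (starLabeling lab) x y m ↔ lab y = some m := by
  have hedge := starGraph_adj_none_some y
  constructor
  · rintro ⟨l, hl, p, hp, e, he, hem⟩
    obtain rfl := (starTree_isLcaSet_iff hxy).mp hl
    obtain rfl : p = hedge.toWalk :=
      congrArg Subtype.val (((starTree X).isTree.isAcyclic.subsingleton_path _ _).elim
        ⟨p, hp⟩ ⟨_, hedge.isPath_toWalk⟩)
    obtain rfl : e = s(none, some y) := List.mem_singleton.mp he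
    exact hem
  · intro h
    exact ⟨none, (starTree_isLcaSet_iff hxy).mpr rfl, hedge.toWalk, hedge.isPath_toWalk,
      s(none, some y), List.mem_singleton_self _, h⟩

lemma HasConstantInLabels.treeLike {M : Type} {eps : X → X → Option M}
    (h : HasConstantInLabels eps) : TreeLike eps := by
  let lab : X → Option M := fun y => eps (exists_ne y).choose y
  refine ⟨starTree X, starLabeling lab, starTree_phylo, fun x y hxy => ?_⟩
  have hlab : eps x y = lab y := h y x _ hxy (exists_ne y).choose_spec
  refine ⟨fun m => by rw [starTree_pathHasLabel_iff lab hxy, hlab], ?_⟩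
  simp only [starTree_pathHasLabel_iff lab hxy, hlab]
  exact Option.eq_none_iff_forall_ne_some

end Star

theorem treeLike_iff_hasConstantInLabels {X M : Type} [Finite X] [Nontrivial X]
    {eps : X → X → Option M} (hnone : ∀ x y : X, x ≠ y → eps x y ≠ none) :
    TreeLike eps ↔ HasConstantInLabels eps :=
  ⟨fun ⟨_, _, _, hT⟩ => hT.hasConstantInLabels hnone, HasConstantInLabels.treeLike⟩

section Xset

variable {X M : Type} {eps : X → X → Option M}

lemma eq_of_mem_Xset_of_ne_none {s : Option M} {x w : X} (hx : x ∈ Xset eps s) (hw : w ≠ x)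
    (hne : eps w x ≠ none) : eps w x = s := by
  obtain ⟨z, -, hzs, hall⟩ := hx
  by_cases hwz : w = z
  · rwa [hwz]
  · exact (hall w hwz hw).resolve_left hne

lemma hasConstantInLabels_of_iUnion_Xset_eq_univ (hnone : ∀ x y : X, x ≠ y → eps x y ≠ none)
    (hcover : ⋃ s, Xset eps s = Set.univ) : HasConstantInLabels eps := by
  intro x z z' hz hz'
  obtain ⟨s, hs⟩ := Set.mem_iUnion.mp (hcover.symm ▸ Set.mem_univ x)
  rw [eq_of_mem_Xset_of_ne_none hs hz (hnone z x hz),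
    eq_of_mem_Xset_of_ne_none hs hz' (hnone z' x hz')]

namespace HasConstantInLabels

lemma eq_of_mem_Xset (h : HasConstantInLabels eps) {s : Option M} {x y : X}
    (hx : x ∈ Xset eps s) (hy : y ≠ x) : eps y x = s := by
  obtain ⟨z, hz, hzs, -⟩ := hx
  exact (h x y z hy hz).trans hzs

lemma mem_Xset (h : HasConstantInLabels eps) {x z : X} (hz : z ≠ x) : x ∈ Xset eps (eps z x) :=
  ⟨z, hz, rfl, fun _ _ hz' => Or.inr (h x _ z hz' hz)⟩

lemma quasiPartition [Nontrivial X] (h : HasConstantInLabels eps)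
    (hattain : ∀ m : M, ∃ x y : X, x ≠ y ∧ eps x y = some m) :
    QuasiPartition eps := by
  refine ⟨fun s t hst => Set.disjoint_left.mpr fun x hs ht => hst ?_, ?_, ?_⟩
  · obtain ⟨y, hy⟩ := exists_ne x
    rw [← h.eq_of_mem_Xset hs hy, h.eq_of_mem_Xset ht hy]
  · refine Set.eq_univ_of_forall fun x => Set.mem_iUnion.mpr ?_
    obtain ⟨z, hz⟩ := exists_ne x
    exact ⟨_, h.mem_Xset hz⟩
  · have hempty {s : Option M} (hs : Xset eps s = ∅) : s = none := by
      obtain _ | m := s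
      · rfl
      · obtain ⟨x, y, hxy, hm⟩ := hattain m
        simpa [hs, hm] using h.mem_Xset hxy
    exact fun s hs t ht => (hempty hs).trans (hempty ht).symm

end HasConstantInLabels

end Xset

theorem stmt6_general {X M : Type} [Fintype X]
    (hX : 1 < Fintype.card X)
    (eps : X → X → Option M)
    (hattain : ∀ m : M, ∃ x y : X, x ≠ y ∧ eps x y = some m)
    (hnone : ∀ x y : X, x ≠ y → eps x y ≠ none) :
    TreeLike eps ↔
      QuasiPartition eps ∧
      (∀ (m : M) (x y : X), x ∈ Xset eps (some m) → y ∉ Xset eps (some m) →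
          y ≠ x → eps y x = some m) := by
  have : Nontrivial X := Fintype.one_lt_card_iff_nontrivial.mp hX
  rw [treeLike_iff_hasConstantInLabels hnone]
  exact ⟨fun h => ⟨h.quasiPartition hattain, fun _ _ _ hx _ hyx => h.eq_of_mem_Xset hx hyx⟩,
    fun h => hasConstantInLabels_of_iUnion_Xset_eq_univ hnone h.1.2.1⟩

theorem stmt6 {X M : Type} [Fintype X] [Fintype M] [Nonempty M]
    (hX : 1 < Fintype.card X)
    (eps : X → X → Option M)
    (hattain : ∀ m : M, ∃ x y : X, x ≠ y ∧ eps x y = some m)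
    (hnone : ∀ x y : X, x ≠ y → eps x y ≠ none) :
    TreeLike eps ↔
      QuasiPartition eps ∧
      (∀ (m : M) (x y : X), x ∈ Xset eps (some m) → y ∉ Xset eps (some m) →
          y ≠ x → eps y x = some m) :=
  stmt6_general hX eps hattain hnone

end GenFitch
end

section
/- If ε: (X×X)∖Δ → M ∪ {⊗} is tree-like and every m ∈ M is attained by ε (i.e., ε⁻¹(m) ≠ ∅ for all m ∈ M), then |M| ≤ 2|X| − 2. -/
namespace GenFitch

theorem stmt7 {X M : Type} [Fintype X] [Fintype M] [Nonempty M]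
    (hX : 1 < Fintype.card X)
    (eps : X → X → Option M)
    (hattain : ∀ m : M, ∃ x y : X, x ≠ y ∧ eps x y = some m)
    (htl : TreeLike eps) :
    Fintype.card M ≤ 2 * Fintype.card X - 2 := by
  classical
  obtain ⟨T, lam, hphylo, hexp⟩ := htl
  haveI : Fintype T.V := T.fintypeV
  -- degree conversion
  have hdeg : ∀ v : T.V, T.deg v = T.G.degree v := by
    intro v
    rw [RootedTree.deg, Set.ncard_eq_toFinset_card', Set.toFinset_card,
      SimpleGraph.card_neighborSet_eq_degree]
  -- each label has an edge
  have hedge : ∀ m : M, ∃ e ∈ T.G.edgeFinset, lam e = some m := by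
    intro m
    obtain ⟨x, y, hxy, hm⟩ := hattain m
    obtain ⟨l, _, p, hp, e, he, hlam⟩ := ((hexp x y hxy).1 m).mp hm
    exact ⟨e, SimpleGraph.mem_edgeFinset.mpr (p.edges_subset_edgeSet he), hlam⟩
  choose f hf hf2 using hedge
  have hMle : Fintype.card M ≤ T.G.edgeFinset.card := by
    apply Finset.card_le_card_of_injOn f (fun m _ => hf m)
    intro a _ b _ hab
    have := hf2 a; rw [hab, hf2 b] at this; exact (Option.some_injective _ this).symm
  set n := Fintype.card T.V with hn
  have hedgecard : T.G.edgeFinset.card + 1 = n := T.isTree.card_edgeFinset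
  -- leaves
  set Lfin : Finset T.V := Finset.univ.image T.leaf with hL
  have hLcard : Lfin.card = Fintype.card X := by
    rw [hL, Finset.card_image_of_injective _ T.leaf_inj, Finset.card_univ]
  have hroot : T.root ∉ Lfin := by
    intro h
    exact hphylo.1 (by simpa [hL, RootedTree.IsLeaf, eq_comm] using h)
  have hnX : Fintype.card X < n := by
    calc Fintype.card X = Lfin.card := hLcard.symm
    _ < n := Finset.card_lt_card (Finset.ssubset_univ_iff.mpr (fun h => hroot (h ▸ Finset.mem_univ _)))
  have hdegpos : ∀ v : T.V, 0 < T.G.degree v := by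
    intro v
    obtain ⟨w, hw⟩ := Fintype.exists_ne_of_one_lt_card (by omega) v
    obtain ⟨p⟩ := T.isTree.isConnected.preconnected v w
    rw [SimpleGraph.degree_pos_iff_exists_adj]
    cases p with
    | nil => exact absurd rfl hw.symm
    | cons h q => exact ⟨_, h⟩
  have hleafdeg : ∀ v ∈ Lfin, T.G.degree v = 1 := by
    intro v hv
    have h1 : (T.G.neighborSet v).ncard ≤ 1 := by
      apply (T.leaf_iff v).mp
      simpa [hL, eq_comm] using hv
    have hd : (T.G.neighborSet v).ncard = T.G.degree v := hdeg v
    have := hdegpos v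
    omega
  have hinner : ∀ v ∈ Finset.univ \ Lfin, v ≠ T.root → 3 ≤ T.G.degree v := by
    intro v hv hvr
    rw [← hdeg]
    refine hphylo.2.2 v ?_ hvr
    intro ⟨x, hx⟩
    exact (Finset.mem_sdiff.mp hv).2 (by rw [hL, ← hx]; exact Finset.mem_image_of_mem _ (Finset.mem_univ _))
  -- sums
  have hsplit : ∑ v ∈ Finset.univ \ Lfin, T.G.degree v + ∑ v ∈ Lfin, T.G.degree v
      = ∑ v : T.V, T.G.degree v := Finset.sum_sdiff (Finset.subset_univ _)
  have hsumL : ∑ v ∈ Lfin, T.G.degree v = Fintype.card X := by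
    rw [Finset.sum_congr rfl hleafdeg, Finset.sum_const, smul_eq_mul, mul_one, hLcard]
  have hrootmem : T.root ∈ Finset.univ \ Lfin := Finset.mem_sdiff.mpr ⟨Finset.mem_univ _, hroot⟩
  have hsumI : 2 + 3 * ((Finset.univ \ Lfin).card - 1) ≤ ∑ v ∈ Finset.univ \ Lfin, T.G.degree v := by
    rw [← Finset.sum_erase_add _ _ hrootmem]
    have h1 : 2 ≤ T.G.degree T.root := by rw [← hdeg]; exact hphylo.2.1
    have h2 : 3 * ((Finset.univ \ Lfin).card - 1) ≤ ∑ v ∈ (Finset.univ \ Lfin).erase T.root, T.G.degree v := by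
      rw [← Finset.card_erase_of_mem hrootmem]
      calc 3 * ((Finset.univ \ Lfin).erase T.root).card
          = ∑ _v ∈ (Finset.univ \ Lfin).erase T.root, 3 := by
            rw [Finset.sum_const, smul_eq_mul, mul_comm]
        _ ≤ _ := Finset.sum_le_sum (fun v hv =>
            hinner v (Finset.mem_of_mem_erase hv) (Finset.ne_of_mem_erase hv))
    omega
  have hcardI : (Finset.univ \ Lfin).card = n - Fintype.card X := by
    rw [Finset.card_sdiff_of_subset (Finset.subset_univ _), Finset.card_univ, hLcard]
  have hhand : ∑ v : T.V, T.G.degree v = 2 * T.G.edgeFinset.card :=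
    T.G.sum_degrees_eq_twice_card_edges
  rw [hcardI] at hsumI
  rw [hsumL] at hsplit
  omega


end GenFitch
end
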